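/- For odd n ≥ 3, consider the 3×n matrix B with entries: B(1,i) = 3n+1−i; B(2,i) = (3n+1)/2 + (i−1)/2 for odd i, B(2,i) = n + i/2 for even i; B(3,i) = (i+1)/2 for odd i, B(3,i) = (n+1)/2 + i/2 for even i. Then row 1 uses exactly the integers in [2n+1,3n], row 2 exactly [n+1,2n], row 3 exactly [1,n], and every column sums to (9n+3)/2. -/
import Mathlib


/-- The second 3×n labeling matrix used for `f_n ∘ O_1`, odd `n`. -/
def matB (n : ℤ) : Fin 3 → ℤ → ℤ
  | 0, i => 3 * n + 1 - i
  | 1, i => if Odd i then (3 * n + 1) / 2 + (i - 1) / 2 else n + i / 2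
  | 2, i => if Odd i then (i + 1) / 2 else (n + 1) / 2 + i / 2

/-- For odd `n ≥ 3`, row 1 of `matB n` (columns `1 ≤ i ≤ n`) uses exactly the
integers in `[2n+1, 3n]`, row 2 exactly `[n+1, 2n]`, row 3 exactly `[1, n]`,
and every column sums to `(9n+3)/2`. -/
theorem stmt_7 (n : ℤ) (hn : 3 ≤ n) (hodd : Odd n) :
    Set.BijOn (matB n 0) (Set.Icc 1 n) (Set.Icc (2 * n + 1) (3 * n)) ∧
    Set.BijOn (matB n 1) (Set.Icc 1 n) (Set.Icc (n + 1) (2 * n)) ∧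
    Set.BijOn (matB n 2) (Set.Icc 1 n) (Set.Icc 1 n) ∧
    ∀ i ∈ Set.Icc 1 n, matB n 0 i + matB n 1 i + matB n 2 i
      = (9 * n + 3) / 2 := by
  rw [Int.odd_iff] at hodd
  refine ⟨⟨?_, ?_, ?_⟩, ⟨?_, ?_, ?_⟩, ⟨?_, ?_, ?_⟩, ?_⟩
  · intro i hi
    simp only [matB, Set.mem_Icc] at *; omega
  · intro a ha b hb hab
    simp only [matB, Set.mem_Icc] at *; omega
  · intro y hy
    simp only [Set.mem_Icc] at hy
    exact ⟨3 * n + 1 - y, by simp only [Set.mem_Icc]; omega,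
      by simp only [matB]; omega⟩
  · intro i hi
    simp only [matB, Set.mem_Icc, Int.odd_iff] at *
    split_ifs with h <;> omega
  · intro a ha b hb hab
    simp only [matB, Set.mem_Icc, Int.odd_iff] at *
    split_ifs at hab with h1 h2 h2 <;> omega
  · intro y hy
    simp only [Set.mem_Icc] at hy
    by_cases h : y ≤ n + (n - 1) / 2
    · refine ⟨2 * (y - n), by simp only [Set.mem_Icc]; omega, ?_⟩
      simp only [matB, Int.odd_iff]
      rw [if_neg (by omega)]; omega
    · refine ⟨2 * (y - (3 * n + 1) / 2) + 1, by simp only [Set.mem_Icc]; omega, ?_⟩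
      simp only [matB, Int.odd_iff]
      rw [if_pos (by omega)]; omega
  · intro i hi
    simp only [matB, Set.mem_Icc, Int.odd_iff] at *
    split_ifs with h <;> omega
  · intro a ha b hb hab
    simp only [matB, Set.mem_Icc, Int.odd_iff] at *
    split_ifs at hab with h1 h2 h2 <;> omega
  · intro y hy
    simp only [Set.mem_Icc] at hy
    by_cases h : y ≤ (n + 1) / 2
    · refine ⟨2 * y - 1, by simp only [Set.mem_Icc]; omega, ?_⟩
      simp only [matB, Int.odd_iff]
      rw [if_pos (by omega)]; omega
    · refine ⟨2 * (y - (n + 1) / 2), by simp only [Set.mem_Icc]; omega, ?_⟩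
      simp only [matB, Int.odd_iff]
      rw [if_neg (by omega)]; omega
  · intro i hi
    simp only [matB, Set.mem_Icc, Int.odd_iff] at *
    split_ifs with h <;> omega
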